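/- Let H be a Hopf algebra and A a right partial H^op-module algebra. The map γ₀ : H^opcop → H^op#A, h ↦ h#1_A, is a partial representation of the Hopf algebra H^opcop in the right partial smash product algebra H^op#A. -/

import Mathlib

open TensorProduct

section Smash

variable {k H A : Type*} [CommRing k] [Ring H] [HopfAlgebra k H] [Ring A] [Algebra k A]

/-- The smash-type multiplication on `H ⊗ A` associated to a bilinear multiplication
`mH` on `H` (e.g. the given or the opposite one) and a right action-type map
`ract : A →ₗ H →ₗ A`:  on pure tensors,
`(g ⊗ b)(h ⊗ a) = Σ mH g h₍₁₎ ⊗ (b·h₍₂₎) a`. -/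
noncomputable def rsmashMul (mH : H →ₗ[k] H →ₗ[k] H) (ract : A →ₗ[k] H →ₗ[k] A) :
    (H ⊗[k] A) ⊗[k] (H ⊗[k] A) →ₗ[k] H ⊗[k] A :=
  (TensorProduct.map (TensorProduct.lift mH)
      ((LinearMap.mul' k A) ∘ₗ (LinearMap.rTensor A (TensorProduct.lift ract)) ∘ₗ
        (TensorProduct.assoc k A H A).symm.toLinearMap)) ∘ₗ
  (TensorProduct.tensorTensorTensorComm k H A H (H ⊗[k] A)).toLinearMap ∘ₗ
  (LinearMap.lTensor (H ⊗[k] A)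
      ((TensorProduct.assoc k H H A).toLinearMap ∘ₗ
        (LinearMap.rTensor A (Coalgebra.comul (R := k)))))

/-- The curried (bilinear) form of the smash-type multiplication. -/
noncomputable def rsmashMul₂ (mH : H →ₗ[k] H →ₗ[k] H) (ract : A →ₗ[k] H →ₗ[k] A) :
    (H ⊗[k] A) →ₗ[k] (H ⊗[k] A) →ₗ[k] H ⊗[k] A :=
  TensorProduct.curry (rsmashMul mH ract)

/-- The right partial smash product `H # A := (1_H ⊗ 1_A)(H ⊗ A)`, spanned by the
elements `h # a := (1 ⊗ 1)(h ⊗ a) = Σ h₍₁₎ ⊗ (1·h₍₂₎)a`. -/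
noncomputable def rsmashSub (mH : H →ₗ[k] H →ₗ[k] H) (ract : A →ₗ[k] H →ₗ[k] A) :
    Submodule k (H ⊗[k] A) :=
  Submodule.span k
    {z | ∃ (h : H) (a : A), z = rsmashMul₂ mH ract ((1 : H) ⊗ₜ (1 : A)) (h ⊗ₜ a)}

end Smash

/-- Sweedler-style sum `h ↦ Σ f(h₍₁₎) * g(h₍₂₎)`. -/
noncomputable def sweedler {k H B : Type*} [CommRing k] [Ring H] [HopfAlgebra k H]
    [AddCommGroup B] [Module k B]
    (mul : B →ₗ[k] B →ₗ[k] B) (f g : H →ₗ[k] B) : H →ₗ[k] B :=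
  TensorProduct.lift ((mul ∘ₗ f).compl₂ g) ∘ₗ Coalgebra.comul

/-- Coopposite Sweedler sum `h ↦ Σ f(h₍₂₎) * g(h₍₁₎)` (Sweedler sum for `Δᶜᵒᵖ = τ ∘ Δ`). -/
noncomputable def sweedlerCoop {k H B : Type*} [CommRing k] [Ring H] [HopfAlgebra k H]
    [AddCommGroup B] [Module k B]
    (mul : B →ₗ[k] B →ₗ[k] B) (f g : H →ₗ[k] B) : H →ₗ[k] B :=
  TensorProduct.lift ((mul ∘ₗ f).compl₂ g) ∘ₗ
    (TensorProduct.comm k H H).toLinearMap ∘ₗ Coalgebra.comul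

/-- A symmetric right partial action of the opposite Hopf algebra `H^op` on `A`
(the multiplication of `H^op` is `x ·op y = y * x`, the comultiplication is that of `H`):
(RPA1) `a·1 = a`; (RPA2) `(ab)·h = (a·h₍₁₎)(b·h₍₂₎)`;
(RPA3) `(a·g)·h = (a·(g ·op h₍₁₎))(1·h₍₂₎) = (1·h₍₁₎)(a·(g ·op h₍₂₎))`. -/
structure IsRightPartialActionOp (k : Type*) {H A : Type*} [CommRing k] [Ring H]
    [HopfAlgebra k H] [Ring A] [Algebra k A] (ract : A →ₗ[k] H →ₗ[k] A) : Prop where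
  rpa1 : ∀ a : A, ract a 1 = a
  rpa2 : ∀ (a b : A) (h : H),
    ract (a * b) h = sweedler (LinearMap.mul k A) (ract a) (ract b) h
  rpa3 : ∀ (a : A) (g h : H),
    ract (ract a g) h =
      sweedler (LinearMap.mul k A) ((ract a) ∘ₗ LinearMap.mulRight k g) (ract 1) h
  rpa3' : ∀ (a : A) (g h : H),
    ract (ract a g) h =
      sweedler (LinearMap.mul k A) (ract 1) ((ract a) ∘ₗ LinearMap.mulRight k g) h

section OpSmash

variable {k H A : Type*} [CommRing k] [Ring H] [HopfAlgebra k H] [Ring A] [Algebra k A]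

/-- The multiplication of the right partial smash product `H^op # A`:
`(g⊗b)(h⊗a) = Σ (g ·op h₍₁₎) ⊗ (b·h₍₂₎)a = Σ h₍₁₎g ⊗ (b·h₍₂₎)a`. -/
noncomputable def opSmashMul₂ (ract : A →ₗ[k] H →ₗ[k] A) :
    (H ⊗[k] A) →ₗ[k] (H ⊗[k] A) →ₗ[k] H ⊗[k] A :=
  rsmashMul₂ (LinearMap.mul k H).flip ract

/-- The right partial smash product `H^op # A = (1⊗1)(H^op⊗A)` as a subspace of `H ⊗ A`. -/
noncomputable def opSmashSub (ract : A →ₗ[k] H →ₗ[k] A) : Submodule k (H ⊗[k] A) :=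
  rsmashSub (LinearMap.mul k H).flip ract

/-- `φ₀ : A → H^op # A`, `a ↦ 1_H # a`. -/
noncomputable def opSmashPhi0 (ract : A →ₗ[k] H →ₗ[k] A) : A →ₗ[k] H ⊗[k] A :=
  (opSmashMul₂ ract ((1 : H) ⊗ₜ (1 : A))) ∘ₗ (TensorProduct.mk k H A (1 : H))

/-- `γ₀ : H^opcop → H^op # A`, `h ↦ h # 1_A`. -/
noncomputable def opSmashGamma0 (ract : A →ₗ[k] H →ₗ[k] A) : H →ₗ[k] H ⊗[k] A :=
  (opSmashMul₂ ract ((1 : H) ⊗ₜ (1 : A))) ∘ₗ ((TensorProduct.mk k H A).flip (1 : A))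

end OpSmash


/-!
Right multiplication by `γ₀ x` in `H^op # A` sends `g ⊗ b` to `Σ x₁g ⊗ b·x₂` (by (RPA2)). Hence in
a sum `Σ w(y₂) γ₀(x S(y₁))` the legs `S(y₂) y₃` of the fourfold coproduct of `y` cancel, and every
side of (PR2) and (PR3) becomes an expression in the partial action alone, which (RPA1) and (RPA3)
identify: `Σ γ₀(h₂) γ₀(S h₁) = 1 ⊗ 1·S(h)`, both sides of (PR2) equal `γ₀(h) (1 ⊗ 1·S(k))`, and
both sides of (PR3) equal `(1 ⊗ 1·S(h)) γ₀(g)`. The antipode enters through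
`Δ(S a) = Σ S(a₂) ⊗ S(a₁)`, which holds because both sides are convolution inverses of `Δ`.
-/

open Coalgebra HopfAlgebra
open LinearMap (mulLeft mulRight mulLeft_apply mulRight_apply)

namespace HopfAlgebra

variable {R A : Type*} [CommSemiring R] [Semiring A] [HopfAlgebra R A] {a : A} {ι : Type*}
  {κ Λ : ι → Type*}

theorem sum_sum_tmul_antipode_mul_eq (repr : Repr R a ι)
    (a₁ : ∀ i, Repr R (repr.left i) (κ i)) :
    ∑ i ∈ repr.index, ∑ j ∈ (a₁ i).index,
      (a₁ i).left j ⊗ₜ[R] (antipode R ((a₁ i).right j) * repr.right i) = a ⊗ₜ 1 := by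
  have coassoc := congr(LinearMap.lTensor A (LinearMap.mul' R A ∘ₗ (antipode R).rTensor A)
    $(sum_tmul_tmul_eq repr a₁ fun i ↦ ℛ R (repr.right i)))
  have counit := congr(LinearMap.lTensor A (Algebra.linearMap R A) $(sum_tmul_counit_eq repr))
  simp only [map_sum, LinearMap.lTensor_tmul, LinearMap.comp_apply, LinearMap.rTensor_tmul,
    LinearMap.mul'_apply, ← tmul_sum, sum_antipode_mul_eq_algebraMap_counit,
    Algebra.linearMap_apply, map_one] at coassoc counit
  rw [coassoc, counit]

theorem sum_sum_antipode_mul_tmul_eq (repr : Repr R a ι)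
    (a₂ : ∀ i, Repr R (repr.right i) (Λ i)) :
    ∑ i ∈ repr.index, ∑ j ∈ (a₂ i).index,
      (antipode R (repr.left i) * (a₂ i).left j) ⊗ₜ[R] (a₂ i).right j = 1 ⊗ₜ a := by
  have coassoc := congr((LinearMap.rTensor A (LinearMap.mul' R A ∘ₗ (antipode R).rTensor A) ∘ₗ
    (TensorProduct.assoc R A A A).symm.toLinearMap)
    $(sum_tmul_tmul_eq repr (fun i ↦ ℛ R (repr.left i)) a₂))
  have counit := congr(LinearMap.rTensor A (Algebra.linearMap R A) $(sum_counit_tmul_eq repr))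
  simp only [map_sum, LinearMap.comp_apply, LinearEquiv.coe_coe, assoc_symm_tmul,
    LinearMap.rTensor_tmul, LinearMap.mul'_apply, ← sum_tmul,
    sum_antipode_mul_eq_algebraMap_counit, Algebra.linearMap_apply, map_one] at coassoc counit
  rw [← coassoc, counit]

theorem sum_sum_sum_tmul_antipode_mul_tmul_eq (repr : Repr R a ι)
    (a₁ : ∀ i, Repr R (repr.left i) (κ i)) (a₂ : ∀ i, Repr R (repr.right i) (Λ i)) :
    ∑ i ∈ repr.index, ∑ j ∈ (a₁ i).index, ∑ m ∈ (a₂ i).index,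
      (a₁ i).left j ⊗ₜ[R] ((antipode R ((a₁ i).right j) * (a₂ i).left m) ⊗ₜ[R] (a₂ i).right m) =
    ∑ i ∈ repr.index, repr.left i ⊗ₜ[R] ((1 : A) ⊗ₜ[R] repr.right i) := by
  set Ξ : A ⊗[R] A →ₗ[R] A ⊗[R] A := LinearMap.rTensor A (LinearMap.mul' R A ∘ₗ
    (antipode R).rTensor A) ∘ₗ (TensorProduct.assoc R A A A).symm.toLinearMap ∘ₗ
    LinearMap.lTensor A comul
  have hΞ (v : A) (i : ι) : Ξ (v ⊗ₜ repr.right i) =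
      ∑ m ∈ (a₂ i).index, (antipode R v * (a₂ i).left m) ⊗ₜ[R] (a₂ i).right m := by
    simp [Ξ, ← (a₂ i).eq, tmul_sum]
  have := congr(LinearMap.lTensor A Ξ $(sum_tmul_tmul_eq repr a₁ a₂))
  simp only [map_sum, LinearMap.lTensor_tmul, hΞ, tmul_sum] at this
  rw [this]
  refine Finset.sum_congr rfl fun i _ ↦ ?_
  rw [← tmul_sum]
  congr 1
  rw [← sum_sum_antipode_mul_tmul_eq (a₂ i) fun m ↦ ℛ R ((a₂ i).right m)]
  simp [Ξ, ← (ℛ R _).eq, tmul_sum]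

theorem comul_comp_antipode :
    comul ∘ₗ antipode R = map (antipode R) (antipode R) ∘ₗ
      (TensorProduct.comm R A A).toLinearMap ∘ₗ (comul : A →ₗ[R] A ⊗[R] A) := by
  apply WithConv.toConv_injective
  refine (left_inv_eq_right_inv ?_ LinearMap.comul_right_inv).symm
  ext c
  have := congr((LinearMap.lTensor A (LinearMap.mul' R A ∘ₗ (antipode R).rTensor A) ∘ₗ
      (TensorProduct.leftComm R A A A).toLinearMap)
    $(sum_sum_sum_tmul_antipode_mul_tmul_eq (ℛ R c) (fun i ↦ ℛ R ((ℛ R c).left i))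
      fun i ↦ ℛ R ((ℛ R c).right i)))
  simp only [map_sum, LinearMap.comp_apply, LinearEquiv.coe_coe, leftComm_tmul,
    LinearMap.lTensor_tmul, LinearMap.rTensor_tmul, LinearMap.mul'_apply] at this
  rw [(ℛ R c).convMul_apply]
  simp only [LinearMap.coe_comp, LinearEquiv.coe_coe, Function.comp_apply, ← (ℛ R _).eq, map_sum,
    comm_tmul, map_tmul, Finset.mul_sum, Finset.sum_mul, Algebra.TensorProduct.tmul_mul_tmul,
    LinearMap.convOne_apply, Algebra.TensorProduct.algebraMap_apply]
  rw [Finset.sum_congr rfl fun _ _ ↦ Finset.sum_comm, this, ← tmul_sum,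
    sum_antipode_mul_eq_algebraMap_counit, Algebra.algebraMap_eq_smul_one, smul_tmul]

end HopfAlgebra

@[simps]
def Coalgebra.Repr.antipode {R A : Type*} [CommSemiring R] [Semiring A] [HopfAlgebra R A]
    {a : A} {ι : Type*} (repr : Repr R a ι) : Repr R (HopfAlgebra.antipode R a) ι where
  index := repr.index
  left i := HopfAlgebra.antipode R (repr.right i)
  right i := HopfAlgebra.antipode R (repr.left i)
  eq := by
    rw [← LinearMap.comp_apply comul, HopfAlgebra.comul_comp_antipode]
    simp [← repr.eq]

section Sweedler

variable {k H B : Type*} [CommRing k] [Ring H] [HopfAlgebra k H] [AddCommGroup B] [Module k B]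
  (mul : B →ₗ[k] B →ₗ[k] B) (f g : H →ₗ[k] B) {v : H} {ι : Type*}

theorem sweedler_eq_sum (r : Repr k v ι) :
    sweedler mul f g v = ∑ i ∈ r.index, mul (f (r.left i)) (g (r.right i)) := by
  simp [sweedler, ← r.eq]

theorem sweedlerCoop_eq_sum (r : Repr k v ι) :
    sweedlerCoop mul f g v = ∑ i ∈ r.index, mul (f (r.right i)) (g (r.left i)) := by
  simp [sweedlerCoop, ← r.eq]

theorem sweedler_one : sweedler mul f g 1 = mul (f 1) (g 1) := by
  simp [sweedler, Algebra.TensorProduct.one_def]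

theorem sweedlerCoop_sum_left {κ : Type*} (s : Finset κ) (F : κ → H →ₗ[k] B) :
    sweedlerCoop mul (∑ j ∈ s, F j) g = ∑ j ∈ s, sweedlerCoop mul (F j) g := by
  ext v
  simp only [sweedlerCoop_eq_sum mul _ g (ℛ k v), LinearMap.sum_apply, map_sum]
  exact Finset.sum_comm

end Sweedler

namespace IsRightPartialActionOp

variable {k H A : Type*} [CommRing k] [Ring H] [HopfAlgebra k H] [Ring A] [Algebra k A]
  {ract : A →ₗ[k] H →ₗ[k] A} (hract : IsRightPartialActionOp k ract)
include hract

theorem sum_ract_ract_mul_antipode (a : A) (z w : H) {y : H} {ι : Type*} (r : Repr k y ι) :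
    ∑ i ∈ r.index, ract (ract a (r.right i * z)) (w * antipode k (r.left i)) =
      sweedler (LinearMap.mul k A) (ract a ∘ₗ mulRight k z)
        (ract 1 ∘ₗ mulRight k (antipode k y)) w := by
  have collapse (Φ : H →ₗ[k] H →ₗ[k] A) := congr(lift Φ
    $(HopfAlgebra.sum_sum_tmul_antipode_mul_eq r fun i ↦ ℛ k (r.left i)))
  simp only [map_sum, lift.tmul] at collapse
  simp only [hract.rpa3, sweedler_eq_sum _ _ _ ((ℛ k w).mul (ℛ k (r.left _)).antipode),
    sweedler_eq_sum _ _ _ (ℛ k w), Repr.mul_index, Repr.mul_left, Repr.mul_right,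
    Repr.antipode_index, Repr.antipode_left, Repr.antipode_right, Finset.sum_product]
  rw [Finset.sum_comm]
  refine Finset.sum_congr rfl fun s _ ↦ ?_
  have := collapse ((LinearMap.mul k A).flip.compl₁₂
    (ract 1 ∘ₗ mulLeft k ((ℛ k w).right s) ∘ₗ antipode k)
    (ract a ∘ₗ mulRight k z ∘ₗ mulLeft k ((ℛ k w).left s)))
  simpa only [LinearMap.compl₁₂_apply, LinearMap.flip_apply, LinearMap.mul_apply',
    LinearMap.comp_apply, mulLeft_apply, mulRight_apply, mul_one, mul_assoc] using this

theorem sum_ract_ract_antipode (a : A) (z : H) {y : H} {ι : Type*} (r : Repr k y ι) :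
    ∑ i ∈ r.index, ract (ract a (r.right i * z)) (antipode k (r.left i)) =
      ract a z * ract 1 (antipode k y) := by
  simpa [sweedler_one] using hract.sum_ract_ract_mul_antipode a z 1 r

theorem sum_ract_ract_one_comp_mulRight_antipode {y : H} {ι : Type*} (r : Repr k y ι) :
    ∑ i ∈ r.index, ract (ract 1 (r.right i)) ∘ₗ mulRight k (antipode k (r.left i)) =
      ract (ract 1 (antipode k y)) := by
  ext w
  simpa [LinearMap.mulRight_one, ← hract.rpa3'] using hract.sum_ract_ract_mul_antipode 1 1 w r

end IsRightPartialActionOp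

section OpSmash

variable {k H A : Type*} [CommRing k] [Ring H] [HopfAlgebra k H] [Ring A] [Algebra k A]
  (ract : A →ₗ[k] H →ₗ[k] A)

theorem opSmashMul₂_tmul_tmul (g h : H) (b a : A) :
    opSmashMul₂ ract (g ⊗ₜ b) (h ⊗ₜ a) =
      map (mulRight k g) (mulRight k a ∘ₗ ract b) (comul h) := by
  simp [opSmashMul₂, rsmashMul₂, rsmashMul, ← (ℛ k h).eq, sum_tmul, tmul_sum]

theorem opSmashGamma0_apply (h : H) :
    opSmashGamma0 ract h = LinearMap.lTensor H (ract 1) (comul h) := by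
  simp [opSmashGamma0, opSmashMul₂_tmul_tmul, LinearMap.lTensor]

theorem opSmashMul₂_tmul_opSmashGamma0 (hract : IsRightPartialActionOp k ract) (g : H) (b : A)
    (v : H) : opSmashMul₂ ract (g ⊗ₜ b) (opSmashGamma0 ract v) =
      map (mulRight k g) (ract b) (comul v) := by
  have coassoc := congr(map (mulRight k g) (LinearMap.mul' k A ∘ₗ map (ract b) (ract 1))
    $(sum_tmul_tmul_eq (ℛ k v) (fun i ↦ ℛ k ((ℛ k v).left i)) fun i ↦ ℛ k ((ℛ k v).right i)))
  have rpa2 (w : H) : ∑ m ∈ (ℛ k w).index, ract b ((ℛ k w).left m) * ract 1 ((ℛ k w).right m) =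
      ract b w := by
    simpa [sweedler_eq_sum _ _ _ (ℛ k w)] using (hract.rpa2 b 1 w).symm
  simp only [map_sum, map_tmul, LinearMap.comp_apply, LinearMap.mul'_apply, ← tmul_sum,
    rpa2] at coassoc
  rw [opSmashGamma0_apply, ← (ℛ k v).eq]
  simp only [map_sum, LinearMap.lTensor_tmul, opSmashMul₂_tmul_tmul,
    ← (ℛ k ((ℛ k v).left _)).eq]
  simpa [tmul_sum] using coassoc

theorem sweedlerCoop_opSmashMul₂_map_comul (hract : IsRightPartialActionOp k ract) (p x : H)
    (f : H →ₗ[k] A) {y : H} {ι : Type*} (r : Repr k y ι) :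
    sweedlerCoop (opSmashMul₂ ract) (map (mulRight k p) f ∘ₗ comul)
        (opSmashGamma0 ract ∘ₗ mulLeft k x ∘ₗ antipode k) y =
      map (mulRight k p)
        (∑ i ∈ r.index, ract (f (r.right i)) ∘ₗ mulRight k (antipode k (r.left i))) (comul x) := by
  -- `Φ s (u ⊗ v ⊗ z) = xₛ₁ v p ⊗ (f z)·(xₛ₂ S(u))`; the left side is `Σ Φ s (y₁ ⊗ S(y₂) y₃ ⊗ y₄)`.
  let Φ (s : H × H) : H ⊗[k] (H ⊗[k] H) →ₗ[k] H ⊗[k] A :=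
    map (mulLeft k ((ℛ k x).left s) ∘ₗ mulRight k p)
        (lift (ract.compl₁₂ f (mulLeft k ((ℛ k x).right s) ∘ₗ antipode k))) ∘ₗ
      (TensorProduct.assoc k H H H).toLinearMap ∘ₗ (TensorProduct.comm k H (H ⊗[k] H)).toLinearMap
  have collapse (s : H × H) := congr(Φ s $(HopfAlgebra.sum_sum_sum_tmul_antipode_mul_tmul_eq r
    (fun i ↦ ℛ k (r.left i)) fun i ↦ ℛ k (r.right i)))
  simp only [Φ, map_sum, LinearMap.comp_apply, LinearEquiv.coe_coe, comm_tmul, assoc_tmul,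
    map_tmul, lift.tmul, LinearMap.compl₁₂_apply, mulLeft_apply, mulRight_apply] at collapse
  rw [sweedlerCoop_eq_sum _ _ _ r]
  simp only [LinearMap.comp_apply, mulLeft_apply, ← (ℛ k (r.right _)).eq, map_sum, map_tmul,
    LinearMap.sum_apply, opSmashMul₂_tmul_opSmashGamma0 ract hract,
    ← ((ℛ k x).mul (ℛ k (r.left _)).antipode).eq, Repr.mul_index, Repr.mul_left, Repr.mul_right,
    Repr.antipode_index, Repr.antipode_left, Repr.antipode_right, Finset.sum_product]
  rw [Finset.sum_congr rfl fun i _ ↦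
    Finset.sum_comm.trans (Finset.sum_congr rfl fun s _ ↦ Finset.sum_comm), Finset.sum_comm,
    ← (ℛ k x).eq]
  simp only [map_sum, map_tmul, LinearMap.sum_apply, LinearMap.comp_apply, mulRight_apply,
    tmul_sum]
  refine Finset.sum_congr rfl fun s _ ↦ ?_
  simpa only [mul_assoc, one_mul] using collapse s

theorem sweedlerCoop_opSmashMul₂_map_comul_antipode (hract : IsRightPartialActionOp k ract)
    (p : H) (f : H →ₗ[k] A) {y : H} {ι : Type*} (r : Repr k y ι) :
    sweedlerCoop (opSmashMul₂ ract) (map (mulRight k p) f ∘ₗ comul)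
        (opSmashGamma0 ract ∘ₗ antipode k) y =
      p ⊗ₜ ∑ i ∈ r.index, ract (f (r.right i)) (antipode k (r.left i)) := by
  simpa [Algebra.TensorProduct.one_def] using
    sweedlerCoop_opSmashMul₂_map_comul ract hract p 1 f r

theorem opSmashMul₂_tmul_one_tmul (hract : IsRightPartialActionOp k ract) (g : H) (b a : A) :
    opSmashMul₂ ract (g ⊗ₜ b) (1 ⊗ₜ a) = g ⊗ₜ (b * a) := by
  simp [opSmashMul₂_tmul_tmul, Algebra.TensorProduct.one_def, hract.rpa1]

theorem sweedlerCoop_opSmashGamma0_mulLeft_antipode (hract : IsRightPartialActionOp k ract)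
    (g h : H) :
    sweedlerCoop (opSmashMul₂ ract) (opSmashGamma0 ract)
        (opSmashGamma0 ract ∘ₗ mulLeft k g ∘ₗ antipode k) h =
      opSmashMul₂ ract (1 ⊗ₜ ract 1 (antipode k h)) (opSmashGamma0 ract g) := by
  have hγ : opSmashGamma0 ract = map (mulRight k 1) (ract 1) ∘ₗ comul := by
    ext v
    simp [opSmashGamma0_apply, LinearMap.mulRight_one, LinearMap.lTensor]
  have := sweedlerCoop_opSmashMul₂_map_comul ract hract 1 g (ract 1) (ℛ k h)
  rw [← hγ, hract.sum_ract_ract_one_comp_mulRight_antipode] at this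
  rw [this, opSmashMul₂_tmul_opSmashGamma0 ract hract]

theorem sweedlerCoop_opSmashGamma0_antipode (hract : IsRightPartialActionOp k ract) (h : H) :
    sweedlerCoop (opSmashMul₂ ract) (opSmashGamma0 ract) (opSmashGamma0 ract ∘ₗ antipode k) h =
      1 ⊗ₜ ract 1 (antipode k h) := by
  have := sweedlerCoop_opSmashGamma0_mulLeft_antipode ract hract 1 h
  simp only [LinearMap.mulLeft_one, LinearMap.id_comp] at this
  rw [this, opSmashGamma0_apply]
  simp [Algebra.TensorProduct.one_def, opSmashMul₂_tmul_one_tmul ract hract, hract.rpa1]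

theorem sweedlerCoop_opSmashMul₂_opSmashGamma0_comp (hract : IsRightPartialActionOp k ract)
    (h y : H) :
    sweedlerCoop (opSmashMul₂ ract) (opSmashMul₂ ract (opSmashGamma0 ract h) ∘ₗ opSmashGamma0 ract)
        (opSmashGamma0 ract ∘ₗ antipode k) y =
      opSmashMul₂ ract (opSmashGamma0 ract h) (1 ⊗ₜ ract 1 (antipode k y)) := by
  have decomp : opSmashMul₂ ract (opSmashGamma0 ract h) ∘ₗ opSmashGamma0 ract =
      ∑ j ∈ (ℛ k h).index,
        map (mulRight k ((ℛ k h).left j)) (ract (ract 1 ((ℛ k h).right j))) ∘ₗ comul := by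
    ext v
    simp only [LinearMap.comp_apply, opSmashGamma0_apply ract h, ← (ℛ k h).eq, map_sum,
      LinearMap.lTensor_tmul, LinearMap.sum_apply, opSmashMul₂_tmul_opSmashGamma0 ract hract]
  rw [decomp, sweedlerCoop_sum_left, opSmashGamma0_apply ract h, ← (ℛ k h).eq]
  simp only [sweedlerCoop_opSmashMul₂_map_comul_antipode ract hract _ _ (ℛ k y), map_sum,
    LinearMap.lTensor_tmul, LinearMap.sum_apply, opSmashMul₂_tmul_one_tmul ract hract]
  refine Finset.sum_congr rfl fun j _ ↦ congrArg _ ?_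
  simpa [hract.rpa1] using hract.sum_ract_ract_antipode (ract 1 ((ℛ k h).right j)) 1 (ℛ k y)

theorem sweedlerCoop_opSmashGamma0_comp_mulRight (hract : IsRightPartialActionOp k ract)
    (h y : H) :
    sweedlerCoop (opSmashMul₂ ract) (opSmashGamma0 ract ∘ₗ mulRight k h)
        (opSmashGamma0 ract ∘ₗ antipode k) y =
      opSmashMul₂ ract (opSmashGamma0 ract h) (1 ⊗ₜ ract 1 (antipode k y)) := by
  have decomp : opSmashGamma0 ract ∘ₗ mulRight k h =
      ∑ j ∈ (ℛ k h).index,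
        map (mulRight k ((ℛ k h).left j)) (ract 1 ∘ₗ mulRight k ((ℛ k h).right j)) ∘ₗ comul := by
    ext v
    simp only [LinearMap.comp_apply, mulRight_apply, opSmashGamma0_apply,
      ← ((ℛ k v).mul (ℛ k h)).eq, ← (ℛ k v).eq, map_sum, LinearMap.sum_apply, map_tmul,
      Repr.mul_index, Repr.mul_left, Repr.mul_right, LinearMap.lTensor_tmul, Finset.sum_product]
    exact Finset.sum_comm
  rw [decomp, sweedlerCoop_sum_left, opSmashGamma0_apply ract h, ← (ℛ k h).eq]
  simp only [sweedlerCoop_opSmashMul₂_map_comul_antipode ract hract _ _ (ℛ k y), map_sum,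
    LinearMap.lTensor_tmul, LinearMap.sum_apply, opSmashMul₂_tmul_one_tmul ract hract]
  refine Finset.sum_congr rfl fun j _ ↦ congrArg _ ?_
  exact hract.sum_ract_ract_antipode 1 ((ℛ k h).right j) (ℛ k y)

end OpSmash

/-- For a right partial `H^op`-module algebra `A`, the map
`γ₀ : H^opcop → H^op # A`, `h ↦ h # 1_A`, is a partial representation of the Hopf
algebra `H^opcop` (opposite multiplication, coopposite comultiplication, antipode `S`)
in the right partial smash product algebra `H^op # A`: (PR1) `γ₀(1) = 1_{H#A}`;
(PR2) `γ₀(h)γ₀(k₍[1]₎)γ₀(S(k₍[2]₎)) = γ₀(h ·op k₍[1]₎)γ₀(S(k₍[2]₎))`;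
(PR3) `γ₀(h₍[1]₎)γ₀(S(h₍[2]₎))γ₀(g) = γ₀(h₍[1]₎)γ₀(S(h₍[2]₎) ·op g)`. -/
theorem opSmashGamma0_partialRep
    {k H A : Type*} [CommRing k] [Ring H] [HopfAlgebra k H] [Ring A] [Algebra k A]
    (ract : A →ₗ[k] H →ₗ[k] A) (hract : IsRightPartialActionOp k ract) :
    ∀ mulB : (H ⊗[k] A) →ₗ[k] (H ⊗[k] A) →ₗ[k] H ⊗[k] A, mulB = opSmashMul₂ ract →
    ∀ γ₀ : H →ₗ[k] H ⊗[k] A, γ₀ = opSmashGamma0 ract →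
      (γ₀ 1 = mulB ((1 : H) ⊗ₜ (1 : A)) ((1 : H) ⊗ₜ (1 : A))) ∧
      (∀ h kk : H,
        sweedlerCoop mulB ((mulB (γ₀ h)) ∘ₗ γ₀)
          (γ₀ ∘ₗ (HopfAlgebra.antipode k : H →ₗ[k] H)) kk =
        sweedlerCoop mulB (γ₀ ∘ₗ LinearMap.mulRight k h)
          (γ₀ ∘ₗ (HopfAlgebra.antipode k : H →ₗ[k] H)) kk) ∧
      (∀ h g : H,
        mulB (sweedlerCoop mulB γ₀
            (γ₀ ∘ₗ (HopfAlgebra.antipode k : H →ₗ[k] H)) h) (γ₀ g) =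
        sweedlerCoop mulB γ₀
          (γ₀ ∘ₗ LinearMap.mulLeft k g ∘ₗ (HopfAlgebra.antipode k : H →ₗ[k] H)) h) := by
  rintro mulB rfl γ₀ rfl
  refine ⟨rfl, fun h y ↦ ?_, fun h g ↦ ?_⟩
  · rw [sweedlerCoop_opSmashMul₂_opSmashGamma0_comp ract hract,
      sweedlerCoop_opSmashGamma0_comp_mulRight ract hract]
  · rw [sweedlerCoop_opSmashGamma0_antipode ract hract,
      sweedlerCoop_opSmashGamma0_mulLeft_antipode ract hract]
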